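/- arXiv:2502.08519 — 7 statements merged into one kernel-verified Lean document; each statement's English description precedes it below -/
import Mathlib

section
/- Let A ∈ ℝ^{n×n} with A = Aᵀ and all entries A_{ij} ≤ −1, and let A_min be the minimum entry. Define the 3-player adversarial team game where the adversary's utility is u(x,y,z) = ⟨x, A y⟩ + (|A_min|/ε) · Σ_{i=1}^n (z_i(x_i − y_i) + z_{n+i}(y_i − x_i)) + z_{2n+1}|A_min|, with x, y ∈ Δⁿ (team, minimizing u) and z ∈ Δ^{2n+1} (adversary, maximizing u). If (x*, y*, z*) is an ε²-Nash equilibrium with ε² ≤ 1/2, then ‖x* − y*‖_∞ ≤ 2ε. -/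
open Matrix Finset

/-- Adversary index set: `2n` "comparison" actions plus one extra action. -/
abbrev AdvIdx (n : ℕ) := (Fin n ⊕ Fin n) ⊕ Unit

/-- Utility of the adversary in the 3-player adversarial team game. -/
noncomputable def advUtil {n : ℕ} (A : Matrix (Fin n) (Fin n) ℝ) (Amin ε : ℝ)
    (x y : Fin n → ℝ) (z : AdvIdx n → ℝ) : ℝ :=
  x ⬝ᵥ A.mulVec y
    + (|Amin| / ε) * ∑ i : Fin n,
        (z (Sum.inl (Sum.inl i)) * (x i - y i) + z (Sum.inl (Sum.inr i)) * (y i - x i))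
    + z (Sum.inr ()) * |Amin|

/-! If `y` copies `x` the comparison terms vanish, so the team can hold the adversary to
`xᵀ A x + |A_min| ≤ -1 + |A_min|`; yet the pure comparison action `i` earns at least
`A_min + (|A_min| / ε) (x*_i - y*_i)` against the equilibrium, and the two ε²-Nash conditions
cap this by `-1 + |A_min| + 2ε²`. Since `2ε² ≤ 1` and `|A_min| ≥ 1`, this forces
`x*_i - y*_i ≤ 2ε`, and symmetrically. -/

section Simplex

variable {𝕜 ι : Type*} [CommSemiring 𝕜] [PartialOrder 𝕜] [IsOrderedRing 𝕜] [Fintype ι]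
  {w f : ι → 𝕜} {c : 𝕜}

lemma le_dotProduct_of_mem_stdSimplex (hw : w ∈ stdSimplex 𝕜 ι) (hf : ∀ i, c ≤ f i) :
    c ≤ w ⬝ᵥ f :=
  calc c = ∑ i, w i * c := by rw [← sum_mul, hw.2, one_mul]
    _ ≤ ∑ i, w i * f i := sum_le_sum fun i _ => mul_le_mul_of_nonneg_left (hf i) (hw.1 i)

lemma dotProduct_le_of_mem_stdSimplex (hw : w ∈ stdSimplex 𝕜 ι) (hf : ∀ i, f i ≤ c) :
    w ⬝ᵥ f ≤ c :=
  calc ∑ i, w i * f i ≤ ∑ i, w i * c :=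
        sum_le_sum fun i _ => mul_le_mul_of_nonneg_left (hf i) (hw.1 i)
    _ = c := by rw [← sum_mul, hw.2, one_mul]

variable {M : Matrix ι ι 𝕜} {u v : ι → 𝕜}

lemma le_dotProduct_mulVec_of_mem_stdSimplex (hu : u ∈ stdSimplex 𝕜 ι)
    (hv : v ∈ stdSimplex 𝕜 ι) (hM : ∀ i j, c ≤ M i j) : c ≤ u ⬝ᵥ M *ᵥ v :=
  le_dotProduct_of_mem_stdSimplex hu fun i => by
    rw [mulVec_apply, dotProduct_comm]
    exact le_dotProduct_of_mem_stdSimplex hv (hM i)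

lemma dotProduct_mulVec_le_of_mem_stdSimplex (hu : u ∈ stdSimplex 𝕜 ι)
    (hv : v ∈ stdSimplex 𝕜 ι) (hM : ∀ i j, M i j ≤ c) : u ⬝ᵥ M *ᵥ v ≤ c :=
  dotProduct_le_of_mem_stdSimplex hu fun i => by
    rw [mulVec_apply, dotProduct_comm]
    exact dotProduct_le_of_mem_stdSimplex hv (hM i)

end Simplex

section AdvUtil

variable {n : ℕ} (A : Matrix (Fin n) (Fin n) ℝ) (Amin ε : ℝ) (x y : Fin n → ℝ) (i : Fin n)

lemma advUtil_self (z : AdvIdx n → ℝ) :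
    advUtil A Amin ε x x z = x ⬝ᵥ A *ᵥ x + z (Sum.inr ()) * |Amin| := by
  simp [advUtil]

lemma advUtil_single_inl_inl :
    advUtil A Amin ε x y (Pi.single (Sum.inl (Sum.inl i)) 1)
      = x ⬝ᵥ A *ᵥ y + |Amin| / ε * (x i - y i) := by
  simp [advUtil, Pi.single_apply]

lemma advUtil_single_inl_inr :
    advUtil A Amin ε x y (Pi.single (Sum.inl (Sum.inr i)) 1)
      = x ⬝ᵥ A *ᵥ y + |Amin| / ε * (y i - x i) := by
  simp [advUtil, Pi.single_apply]

end AdvUtil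

lemma le_two_mul_of_div_mul_le {a ε d : ℝ} (ha : 0 < a) (hε : 0 < ε) (hε2 : ε ^ 2 ≤ 1 / 2)
    (h : a / ε * d ≤ 2 * a - 1 + 2 * ε ^ 2) : d ≤ 2 * ε := by
  rw [div_mul_eq_mul_div, div_le_iff₀ hε] at h
  nlinarith

theorem stmt_3_general {n : ℕ} (A : Matrix (Fin n) (Fin n) ℝ)
    (hentries : ∀ i j, A i j ≤ -1)
    (Amin : ℝ) (hAmin : IsLeast {r : ℝ | ∃ i j, A i j = r} Amin)
    (ε : ℝ) (hε : 0 < ε) (hε2 : ε ^ 2 ≤ 1 / 2)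
    (xs ys : Fin n → ℝ) (zs : AdvIdx n → ℝ)
    (hxs : xs ∈ stdSimplex ℝ (Fin n)) (hys : ys ∈ stdSimplex ℝ (Fin n))
    (hzs : zs ∈ stdSimplex ℝ (AdvIdx n))
    (hNashy : ∀ y' ∈ stdSimplex ℝ (Fin n),
      advUtil A Amin ε xs ys zs ≤ advUtil A Amin ε xs y' zs + ε ^ 2)
    (hNashz : ∀ z' ∈ stdSimplex ℝ (AdvIdx n),
      advUtil A Amin ε xs ys z' ≤ advUtil A Amin ε xs ys zs + ε ^ 2) :
    ∀ i : Fin n, |xs i - ys i| ≤ 2 * ε := by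
  intro i
  obtain ⟨⟨i₀, j₀, hAmin_mem⟩, hAmin_le⟩ := hAmin
  have hAmin_neg : Amin ≤ -1 := hAmin_mem ▸ hentries i₀ j₀
  have hAmin_abs : |Amin| = -Amin := abs_of_neg (by linarith)
  have hlow : Amin ≤ xs ⬝ᵥ A *ᵥ ys :=
    le_dotProduct_mulVec_of_mem_stdSimplex hxs hys fun i j => hAmin_le ⟨i, j, rfl⟩
  have hself : xs ⬝ᵥ A *ᵥ xs ≤ -1 := dotProduct_mulVec_le_of_mem_stdSimplex hxs hxs hentries
  have hz_le : zs (Sum.inr ()) * |Amin| ≤ |Amin| :=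
    mul_le_of_le_one_left (abs_nonneg _) (mem_Icc_of_mem_stdSimplex hzs _).2
  have hvalue : advUtil A Amin ε xs ys zs ≤ -1 + |Amin| + ε ^ 2 := by
    have := hNashy xs hxs
    rw [advUtil_self] at this
    linarith
  have hpure : ∀ e, advUtil A Amin ε xs ys (Pi.single e 1) ≤ -1 + |Amin| + 2 * ε ^ 2 :=
    fun e => by linarith [hNashz _ (single_mem_stdSimplex ℝ e)]
  have h₁ := hpure (Sum.inl (Sum.inl i))
  have h₂ := hpure (Sum.inl (Sum.inr i))
  rw [advUtil_single_inl_inl] at h₁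
  rw [advUtil_single_inl_inr] at h₂
  have ha : 0 < |Amin| := by linarith
  rw [abs_sub_le_iff]
  exact ⟨le_two_mul_of_div_mul_le ha hε hε2 (by linarith),
    le_two_mul_of_div_mul_le ha hε hε2 (by linarith)⟩

theorem stmt_3 {n : ℕ} (A : Matrix (Fin n) (Fin n) ℝ) (hsym : A.IsSymm)
    (hentries : ∀ i j, A i j ≤ -1)
    (Amin : ℝ) (hAmin : IsLeast {r : ℝ | ∃ i j, A i j = r} Amin)
    (ε : ℝ) (hε : 0 < ε) (hε2 : ε ^ 2 ≤ 1 / 2)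
    (xs ys : Fin n → ℝ) (zs : AdvIdx n → ℝ)
    (hxs : xs ∈ stdSimplex ℝ (Fin n)) (hys : ys ∈ stdSimplex ℝ (Fin n))
    (hzs : zs ∈ stdSimplex ℝ (AdvIdx n))
    (hNashx : ∀ x' ∈ stdSimplex ℝ (Fin n),
      advUtil A Amin ε xs ys zs ≤ advUtil A Amin ε x' ys zs + ε ^ 2)
    (hNashy : ∀ y' ∈ stdSimplex ℝ (Fin n),
      advUtil A Amin ε xs ys zs ≤ advUtil A Amin ε xs y' zs + ε ^ 2)
    (hNashz : ∀ z' ∈ stdSimplex ℝ (AdvIdx n),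
      advUtil A Amin ε xs ys z' ≤ advUtil A Amin ε xs ys zs + ε ^ 2) :
    ∀ i : Fin n, |xs i - ys i| ≤ 2 * ε :=
  stmt_3_general A hentries Amin hAmin ε hε hε2 xs ys zs hxs hys hzs hNashy hNashz
end

section
/- In the setting of the 3-player adversarial team game with adversary utility u(x,y,z) = ⟨x, A y⟩ + (|A_min|/ε) Σᵢ (z_i(x_i − y_i) + z_{n+i}(y_i − x_i)) + z_{2n+1}|A_min|, where A = Aᵀ has all entries ≤ −1: if (x*, y*, z*) is an ε²-Nash equilibrium with ε ≤ 1/10, then z*_j ≤ 9ε for all j ∈ [2n], and consequently z*_{2n+1} ≥ 1 − 18nε. -/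
open Matrix Finset

/-
Moving all the mass of an action `p` onto another action `q` is a feasible deviation, so in an
ε²-equilibrium the weight on `p` times the regret of `p` against `q` is at most ε², for each of
the three players. If the adversary puts weight above `9ε` on the comparison action `x_j > y_j`,
its regret bound forces `x_j - y_j > ε/2`, so the cost of action `j` for `x` is at least
`7|A_min|`. The regret bound of `x` (with `x_j > ε/2`) then makes every action of `x` nearly as
costly; since `(A y)_k ≤ -1`, this cost must come from adversary weight above `2ε` on every
comparison action `x_k > y_k`, and the adversary's regret bound then gives `x_k > y_k` for all
`k`, contradicting `∑ x = ∑ y`. The actions `y_j > x_j` are handled by exchanging `x` and `y`.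
-/

section ApproxBestResponse

variable {ι : Type*} [Fintype ι] [DecidableEq ι] {f : (ι → ℝ) → ℝ} {c z : ι → ℝ} {b η : ℝ}

theorem mul_sub_le_of_approx_maximizer (hf : ∀ z', f z' = z' ⬝ᵥ c + b)
    (hz : z ∈ stdSimplex ℝ ι) (h : ∀ z' ∈ stdSimplex ℝ ι, f z' ≤ f z + η) (p q : ι) :
    z p * (c q - c p) ≤ η := by
  have hshift : z + Pi.single q (z p) - Pi.single p (z p) ∈ stdSimplex ℝ ι := by
    refine ⟨fun i => ?_, ?_⟩
    · have hq : 0 ≤ Pi.single (M := fun _ => ℝ) q (z p) i := by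
        rcases eq_or_ne i q with rfl | hi <;> simp [*, hz.1 p]
      have hp : Pi.single (M := fun _ => ℝ) p (z p) i ≤ z i := by
        rcases eq_or_ne i p with rfl | hi <;> simp [*, hz.1 i]
      simp only [Pi.add_apply, Pi.sub_apply]
      linarith
    · simp [Finset.sum_add_distrib, Finset.sum_sub_distrib, hz.2]
  have := h _ hshift
  rw [hf, hf, sub_dotProduct, add_dotProduct, single_dotProduct, single_dotProduct] at this
  linarith

theorem mul_sub_le_of_approx_minimizer (hf : ∀ z', f z' = z' ⬝ᵥ c + b)
    (hz : z ∈ stdSimplex ℝ ι) (h : ∀ z' ∈ stdSimplex ℝ ι, f z ≤ f z' + η) (p q : ι) :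
    z p * (c p - c q) ≤ η := by
  have := mul_sub_le_of_approx_maximizer (f := fun z' => -f z') (c := -c) (b := -b) (η := η)
    (fun z' => by rw [hf, dotProduct_neg, neg_add]) hz (fun z' hz' => by linarith [h z' hz']) p q
  rwa [Pi.neg_apply, Pi.neg_apply, neg_sub_neg] at this

end ApproxBestResponse

theorem vecMul_apply_mem_Icc {m ι : Type*} [Fintype m] {A : Matrix m ι ℝ} {x : m → ℝ} {lo hi : ℝ}
    (hA : ∀ i j, A i j ∈ Set.Icc lo hi) (hx : x ∈ stdSimplex ℝ m) (j : ι) :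
    (x ᵥ* A) j ∈ Set.Icc lo hi :=
  (convex_Icc lo hi).sum_mem (fun i _ => hx.1 i) hx.2 (fun i _ => hA i j)

theorem mulVec_apply_mem_Icc {m ι : Type*} [Fintype ι] {A : Matrix m ι ℝ} {y : ι → ℝ} {lo hi : ℝ}
    (hA : ∀ i j, A i j ∈ Set.Icc lo hi) (hy : y ∈ stdSimplex ℝ ι) (i : m) :
    (A *ᵥ y) i ∈ Set.Icc lo hi := by
  rw [← vecMul_transpose]
  exact vecMul_apply_mem_Icc (fun j i => hA i j) hy i

noncomputable def advGain {n : ℕ} (M ε : ℝ) (x y : Fin n → ℝ) : AdvIdx n → ℝ :=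
  Sum.elim (Sum.elim (fun i => M / ε * (x i - y i)) (fun i => M / ε * (y i - x i))) fun _ => M

section Representation

variable {n : ℕ} (A : Matrix (Fin n) (Fin n) ℝ) (Amin ε : ℝ) (x y : Fin n → ℝ) (z : AdvIdx n → ℝ)

theorem advUtil_eq_gain :
    advUtil A Amin ε x y z = z ⬝ᵥ advGain |Amin| ε x y + x ⬝ᵥ A *ᵥ y := by
  have hsum : |Amin| / ε * ∑ i : Fin n,
        (z (Sum.inl (Sum.inl i)) * (x i - y i) + z (Sum.inl (Sum.inr i)) * (y i - x i)) =
      ∑ i, z (Sum.inl (Sum.inl i)) * (|Amin| / ε * (x i - y i))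
        + ∑ i, z (Sum.inl (Sum.inr i)) * (|Amin| / ε * (y i - x i)) := by
    rw [Finset.mul_sum, ← Finset.sum_add_distrib]
    exact Finset.sum_congr rfl fun i _ => by ring
  simp only [advUtil, dotProduct, Fintype.sum_sum_type, advGain, Sum.elim_inl, Sum.elim_inr,
    Finset.univ_unique, Finset.sum_singleton] at hsum ⊢
  linarith

theorem advUtil_eq_left :
    advUtil A Amin ε x y z =
      x ⬝ᵥ (A *ᵥ y + (|Amin| / ε) • (z ∘ Sum.inl ∘ Sum.inl - z ∘ Sum.inl ∘ Sum.inr))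
        + (y ⬝ᵥ ((|Amin| / ε) • (z ∘ Sum.inl ∘ Sum.inr - z ∘ Sum.inl ∘ Sum.inl))
          + z (Sum.inr ()) * |Amin|) := by
  have hsum : |Amin| / ε * ∑ i : Fin n,
        (z (Sum.inl (Sum.inl i)) * (x i - y i) + z (Sum.inl (Sum.inr i)) * (y i - x i)) =
      x ⬝ᵥ ((|Amin| / ε) • (z ∘ Sum.inl ∘ Sum.inl - z ∘ Sum.inl ∘ Sum.inr))
        + y ⬝ᵥ ((|Amin| / ε) • (z ∘ Sum.inl ∘ Sum.inr - z ∘ Sum.inl ∘ Sum.inl)) := by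
    simp only [dotProduct, Pi.smul_apply, Pi.sub_apply, Function.comp_apply, smul_eq_mul,
      Finset.mul_sum, ← Finset.sum_add_distrib]
    exact Finset.sum_congr rfl fun i _ => by ring
  rw [advUtil, hsum, dotProduct_add]
  ring

theorem advUtil_eq_right :
    advUtil A Amin ε x y z =
      y ⬝ᵥ (x ᵥ* A + (|Amin| / ε) • (z ∘ Sum.inl ∘ Sum.inr - z ∘ Sum.inl ∘ Sum.inl))
        + (x ⬝ᵥ ((|Amin| / ε) • (z ∘ Sum.inl ∘ Sum.inl - z ∘ Sum.inl ∘ Sum.inr))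
          + z (Sum.inr ()) * |Amin|) := by
  rw [advUtil_eq_left, dotProduct_add, dotProduct_add, dotProduct_mulVec,
    dotProduct_comm y (x ᵥ* A)]
  ring

end Representation

theorem half_lt_of_mul_regret_le {M ε z δ : ℝ} (hM : 1 ≤ M) (hε : 0 < ε) (hε1 : ε < 1)
    (hz : 2 * ε < z) (h : z * (M - M / ε * δ) ≤ ε ^ 2) : ε / 2 < δ := by
  by_contra! hδ
  have hregret : M / 2 ≤ M - M / ε * δ := by
    have : M / ε * δ ≤ M / ε * (ε / 2) := mul_le_mul_of_nonneg_left hδ (by positivity)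
    rw [show M / ε * (ε / 2) = M / 2 by field_simp] at this
    linarith
  nlinarith

theorem le_nine_mul_of_approx_equilibrium {ι : Type*} [Fintype ι] {M ε : ℝ}
    {x y zl zr a : ι → ℝ} (hM : 1 ≤ M) (hε : 0 < ε) (hε10 : ε ≤ 1 / 10)
    (hy : ∀ i, 0 ≤ y i) (hsum : ∑ i, x i = ∑ i, y i) (hzr : ∀ i, 0 ≤ zr i)
    (ha : ∀ i, a i ∈ Set.Icc (-M) (-1))
    (hl : ∀ k, zl k * (M - M / ε * (x k - y k)) ≤ ε ^ 2)
    (hr : ∀ k, zr k * (M - M / ε * (y k - x k)) ≤ ε ^ 2)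
    (hteam : ∀ j k, x j * ((a + (M / ε) • (zl - zr)) j - (a + (M / ε) • (zl - zr)) k) ≤ ε ^ 2)
    (j : ι) : zl j ≤ 9 * ε := by
  by_contra! hzlj
  set K := M / ε
  have hKε : K * ε = M := div_mul_cancel₀ M hε.ne'
  have hKpos : 0 < K := by positivity
  have hcost : ∀ k, (a + K • (zl - zr)) k = a k + K * (zl k - zr k) := fun k => rfl
  have hε1 : ε < 1 := by linarith
  have hδj : ε / 2 < x j - y j := half_lt_of_mul_regret_le hM hε hε1 (by linarith) (hl j)
  have hzrj : zr j ≤ ε ^ 2 := by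
    have : 1 ≤ M - K * (y j - x j) := by nlinarith
    nlinarith [hr j, hzr j]
  have hcost_j : 7 * M ≤ a j + K * (zl j - zr j) := by nlinarith [(ha j).1]
  have hcost_k : ∀ k, 7 * M - 2 * ε ≤ a k + K * (zl k - zr k) := by
    intro k
    by_contra! hk
    have hteamjk := hteam j k
    rw [hcost, hcost] at hteamjk
    nlinarith [hy j]
  have hzlk : ∀ k, 2 * ε < zl k := by
    intro k
    have : 2 * M < K * (zl k - zr k) := by linarith [hcost_k k, (ha k).2]
    nlinarith [hzr k]
  have hδ : ∀ k, 0 < x k - y k := fun k =>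
    (half_pos hε).trans (half_lt_of_mul_regret_le hM hε hε1 (hzlk k) (hl k))
  have : 0 < ∑ i, (x i - y i) := Finset.sum_pos (fun i _ => hδ i) ⟨j, Finset.mem_univ j⟩
  rw [Finset.sum_sub_distrib, hsum, sub_self] at this
  exact this.false

theorem stmt_4_general {n : ℕ} (A : Matrix (Fin n) (Fin n) ℝ)
    (hentries : ∀ i j, A i j ≤ -1)
    (Amin : ℝ) (hAmin : IsLeast {r : ℝ | ∃ i j, A i j = r} Amin)
    (ε : ℝ) (hε : 0 < ε) (hε10 : ε ≤ 1 / 10)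
    (xs ys : Fin n → ℝ) (zs : AdvIdx n → ℝ)
    (hxs : xs ∈ stdSimplex ℝ (Fin n)) (hys : ys ∈ stdSimplex ℝ (Fin n))
    (hzs : zs ∈ stdSimplex ℝ (AdvIdx n))
    (hNashx : ∀ x' ∈ stdSimplex ℝ (Fin n),
      advUtil A Amin ε xs ys zs ≤ advUtil A Amin ε x' ys zs + ε ^ 2)
    (hNashy : ∀ y' ∈ stdSimplex ℝ (Fin n),
      advUtil A Amin ε xs ys zs ≤ advUtil A Amin ε xs y' zs + ε ^ 2)
    (hNashz : ∀ z' ∈ stdSimplex ℝ (AdvIdx n),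
      advUtil A Amin ε xs ys z' ≤ advUtil A Amin ε xs ys zs + ε ^ 2) :
    (∀ j : Fin n ⊕ Fin n, zs (Sum.inl j) ≤ 9 * ε) ∧
      zs (Sum.inr ()) ≥ 1 - 18 * n * ε := by
  obtain ⟨⟨i₀, j₀, hAmin_eq⟩, hAmin_le⟩ := hAmin
  have hAmin_abs : |Amin| = -Amin := abs_of_neg (by linarith [hentries i₀ j₀])
  have hM : 1 ≤ |Amin| := by linarith [hentries i₀ j₀]
  have hA : ∀ i j, A i j ∈ Set.Icc (-|Amin|) (-1) := fun i j =>
    ⟨by rw [hAmin_abs, neg_neg]; exact hAmin_le ⟨i, j, rfl⟩, hentries i j⟩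
  have hadv (p : Fin n ⊕ Fin n) := mul_sub_le_of_approx_maximizer
    (fun z => advUtil_eq_gain A Amin ε xs ys z) hzs hNashz (Sum.inl p) (Sum.inr ())
  have hsum : ∑ i, xs i = ∑ i, ys i := hxs.2.trans hys.2.symm
  have hcomparison : ∀ j : Fin n ⊕ Fin n, zs (Sum.inl j) ≤ 9 * ε
    | .inl j => le_nine_mul_of_approx_equilibrium hM hε hε10 hys.1 hsum (fun i => hzs.1 _)
        (mulVec_apply_mem_Icc hA hys) (fun k => hadv (.inl k)) (fun k => hadv (.inr k))
        (mul_sub_le_of_approx_minimizer (fun x => advUtil_eq_left A Amin ε x ys zs) hxs hNashx) j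
    | .inr j => le_nine_mul_of_approx_equilibrium hM hε hε10 hxs.1 hsum.symm (fun i => hzs.1 _)
        (vecMul_apply_mem_Icc hA hxs) (fun k => hadv (.inr k)) (fun k => hadv (.inl k))
        (mul_sub_le_of_approx_minimizer (fun y => advUtil_eq_right A Amin ε xs y zs) hys hNashy) j
  refine ⟨hcomparison, ?_⟩
  have htotal := hzs.2
  rw [Fintype.sum_sum_type, Fintype.univ_unit, Finset.sum_singleton] at htotal
  have hbound := Finset.sum_le_card_nsmul Finset.univ _ _ fun j _ => hcomparison j
  simp only [Finset.card_univ, Fintype.card_sum, Fintype.card_fin, nsmul_eq_mul] at hbound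
  push_cast at hbound
  linarith

theorem stmt_4 {n : ℕ} (A : Matrix (Fin n) (Fin n) ℝ) (hsym : A.IsSymm)
    (hentries : ∀ i j, A i j ≤ -1)
    (Amin : ℝ) (hAmin : IsLeast {r : ℝ | ∃ i j, A i j = r} Amin)
    (ε : ℝ) (hε : 0 < ε) (hε10 : ε ≤ 1 / 10)
    (xs ys : Fin n → ℝ) (zs : AdvIdx n → ℝ)
    (hxs : xs ∈ stdSimplex ℝ (Fin n)) (hys : ys ∈ stdSimplex ℝ (Fin n))
    (hzs : zs ∈ stdSimplex ℝ (AdvIdx n))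
    (hNashx : ∀ x' ∈ stdSimplex ℝ (Fin n),
      advUtil A Amin ε xs ys zs ≤ advUtil A Amin ε x' ys zs + ε ^ 2)
    (hNashy : ∀ y' ∈ stdSimplex ℝ (Fin n),
      advUtil A Amin ε xs ys zs ≤ advUtil A Amin ε xs y' zs + ε ^ 2)
    (hNashz : ∀ z' ∈ stdSimplex ℝ (AdvIdx n),
      advUtil A Amin ε xs ys z' ≤ advUtil A Amin ε xs ys zs + ε ^ 2) :
    (∀ j : Fin n ⊕ Fin n, zs (Sum.inl j) ≤ 9 * ε) ∧
      zs (Sum.inr ()) ≥ 1 - 18 * n * ε :=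
  stmt_4_general A hentries Amin hAmin ε hε hε10 xs ys zs hxs hys hzs hNashx hNashy hNashz
end

section
/- Define v(y₂) = (109 + 5890·y₂ + 3000·y₂²)/(110 + 6000·y₂) for y₂ ∈ [0,1]. Then v is strictly convex on [0,1] and attains its unique minimum at y₂ = (9√3 − 11)/600, which is an irrational number. -/
noncomputable def vfun (y : ℝ) : ℝ :=
  (109 + 5890 * y + 3000 * y ^ 2) / (110 + 6000 * y)

/-!
Dividing out, `vfun y = φ (6000 y + 110) + 289/300` with `φ d = d / 12000 + (81/40) / d`.
On `d > 0` the function `φ` is strictly convex, being a positive multiple of `d⁻¹` plus a linear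
term, and by AM-GM it is minimised exactly at `d² = 12000 · 81/40`, i.e. `d = 90√3`, which
corresponds to `y = (9√3 - 11)/600`.
-/

open Set

theorem StrictConvexOn.const_mul {E : Type*} [AddCommMonoid E] [Module ℝ E] {s : Set E}
    {f : E → ℝ} (hf : StrictConvexOn ℝ s f) {c : ℝ} (hc : 0 < c) :
    StrictConvexOn ℝ s fun x => c * f x :=
  ⟨hf.1, fun _ hx _ hy hxy _ _ ha hb hab => by
    have h := mul_lt_mul_of_pos_left (hf.2 hx hy hxy ha hb hab) hc
    simp only [smul_eq_mul] at h ⊢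
    linarith⟩

theorem StrictConvexOn.comp_mul_add {s : Set ℝ} {f : ℝ → ℝ} (hf : StrictConvexOn ℝ s f)
    {a : ℝ} (ha : a ≠ 0) (b : ℝ) :
    StrictConvexOn ℝ ((fun x => a * x + b) ⁻¹' s) fun x => f (a * x + b) := by
  have hcomb : ∀ {x y θ μ : ℝ}, θ + μ = 1 →
      a * (θ • x + μ • y) + b = θ • (a * x + b) + μ • (a * y + b) := by
    intro x y θ μ h
    simp only [smul_eq_mul]
    linear_combination b * h.symm
  refine ⟨fun x hx y hy θ μ hθ hμ hθμ => ?_, fun x hx y hy hxy θ μ hθ hμ hθμ => ?_⟩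
  · simpa only [mem_preimage, hcomb hθμ] using hf.1 hx hy hθ hμ hθμ
  · have hne : a * x + b ≠ a * y + b := fun h => hxy (mul_left_cancel₀ ha (add_right_cancel h))
    simpa only [hcomb hθμ] using hf.2 hx hy hne hθ hμ hθμ

theorem strictConvexOn_mul_add_div {a b : ℝ} (ha : 0 ≤ a) (hb : 0 < b) :
    StrictConvexOn ℝ (Ioi 0) fun d => a * d + b / d := by
  have hinv : StrictConvexOn ℝ (Ioi 0) fun d : ℝ => d⁻¹ := by
    simpa only [zpow_neg_one] using strictConvexOn_zpow (m := -1) (by norm_num) (by norm_num)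
  refine ((hinv.const_mul hb).add_convexOn ((convexOn_id (convex_Ioi 0)).smul ha)).congr
    fun d _ => ?_
  simp only [Pi.add_apply, smul_eq_mul, id, div_eq_mul_inv]
  ring

theorem mul_add_div_lt_mul_add_div {a b m d : ℝ} (ha : 0 < a) (hd : 0 < d)
    (hb : a * m ^ 2 = b) (hdm : d ≠ m) : a * m + b / m < a * d + b / d := by
  have hsq : 0 < a * (d - m) ^ 2 / d := by
    have := sub_ne_zero.mpr hdm
    positivity
  have hdiff : a * d + b / d - (a * m + b / m) = a * (d - m) ^ 2 / d := by
    subst hb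
    field_simp
    ring
  linarith

theorem vfun_eq {y : ℝ} (hy : 6000 * y + 110 ≠ 0) :
    vfun y = (1 / 12000 * (6000 * y + 110) + 81 / 40 / (6000 * y + 110)) + 289 / 300 := by
  rw [vfun, add_comm (110 : ℝ), div_eq_iff hy, add_mul, add_mul, div_mul_cancel₀ _ hy]
  ring

theorem stmt_6 :
    StrictConvexOn ℝ (Set.Icc (0 : ℝ) 1) vfun ∧
    ((9 * Real.sqrt 3 - 11) / 600 ∈ Set.Icc (0 : ℝ) 1) ∧
    (∀ y ∈ Set.Icc (0 : ℝ) 1, y ≠ (9 * Real.sqrt 3 - 11) / 600 →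
      vfun ((9 * Real.sqrt 3 - 11) / 600) < vfun y) ∧
    Irrational ((9 * Real.sqrt 3 - 11) / 600) := by
  have hpos : ∀ y ∈ Icc (0 : ℝ) 1, 0 < 6000 * y + 110 := fun y hy => by linarith [hy.1]
  have hsqrt : Real.sqrt 3 ^ 2 = 3 := Real.sq_sqrt (by norm_num)
  have hsqrt_pos : 0 < Real.sqrt 3 := by positivity
  refine ⟨?_, ?_, fun y hy hne => ?_, ?_⟩
  · have hφ := strictConvexOn_mul_add_div (a := 1 / 12000) (b := 81 / 40) (by norm_num)
      (by norm_num)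
    exact (((hφ.comp_mul_add (by norm_num) 110).add_const (289 / 300)).subset hpos
      (convex_Icc 0 1)).congr fun y hy => (vfun_eq (hpos y hy).ne').symm
  · constructor <;> nlinarith
  · have hd₀ : 6000 * ((9 * Real.sqrt 3 - 11) / 600) + 110 = 90 * Real.sqrt 3 := by ring
    rw [vfun_eq (hd₀.trans_ne (by positivity)), vfun_eq (hpos y hy).ne', hd₀]
    have hmin := mul_add_div_lt_mul_add_div (a := 1 / 12000) (b := 81 / 40) (m := 90 * Real.sqrt 3)
      (by norm_num) (hpos y hy) (by nlinarith) (fun h => hne (by linarith))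
    linarith
  · have h := ((Nat.prime_three.irrational_sqrt.natCast_mul (m := 9) (by norm_num)).sub_natCast
      11).div_natCast (m := 600) (by norm_num)
    exact_mod_cast h
end

section
/- Let G be a graph on n vertices with maximum clique size k ≥ 10, let δ ∈ (0,1), and define Ā ∈ ℝ^{n×n} by Ā_{ii} = δ, Ā_{ij} = 1 if {i,j} ∈ E, and Ā_{ij} = 0 otherwise. Let C_k be a clique of size k and suppose (x̂, x̂) is a symmetric ε-well-supported Nash equilibrium of the identical-payoff game (Ā, Ā) with support contained in C_k. Then, with x* = (1/k)Σ_{i∈C_k} e_i: (i) ‖x̂ − x*‖_∞ ≤ ((k − δ)/(1 − δ))·ε, and (ii) ⟨x̂, Ā x̂⟩ ≥ 1 − 1/k + δ/k − ((k − δ)/(1 − δ))·ε. -/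
/-!
On a clique `C` the matrix `Ā` is `J - (1 - δ) I`, so for `x̂` supported on `C` we get
`(Ā x̂)_i = 1 - (1 - δ) x̂_i` for `i ∈ C`. The well-supported condition compares these
payoffs and gives `x̂_i - x̂_j ≤ ε / (1 - δ)` on `C`; since the uniform value `1/k` lies
between the minimum and the maximum of `x̂` on `C`, every coordinate is within `ε / (1 - δ)`
of `1/k`. Finally `⟨x̂, Ā x̂⟩ = 1 - (1 - δ) ∑ x̂_i² ≥ 1 - (1 - δ) max_i x̂_i`. Both bounds,
with `ε / (1 - δ)` and `ε`, are sharper than the stated ones because `k - δ ≥ 1`.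
-/

open Matrix Finset

lemma abs_sub_sum_div_card_le {ι : Type*} {s : Finset ι} {f : ι → ℝ} {η : ℝ}
    (hgap : ∀ i ∈ s, ∀ j ∈ s, f i ≤ f j + η) {i : ι} (hi : i ∈ s) :
    |f i - (∑ j ∈ s, f j) / #s| ≤ η := by
  have hs : s.Nonempty := ⟨i, hi⟩
  have hcard : (0 : ℝ) < #s := by exact_mod_cast hs.card_pos
  have hsum_const : ∑ _j ∈ s, (∑ j ∈ s, f j) / #s = ∑ j ∈ s, f j := by
    rw [sum_const, nsmul_eq_mul, mul_div_cancel₀ _ hcard.ne']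
  obtain ⟨jlo, hjlo, hlo⟩ := exists_le_of_sum_le hs hsum_const.ge
  obtain ⟨jhi, hjhi, hhi⟩ := exists_le_of_sum_le hs hsum_const.le
  rw [abs_le]
  constructor
  · linarith [hgap jhi hjhi i hi]
  · linarith [hgap i hi jlo hjlo]

lemma sum_sq_le_mul_sum {ι : Type*} {s : Finset ι} {f : ι → ℝ} {M : ℝ}
    (hnn : ∀ i ∈ s, 0 ≤ f i) (hle : ∀ i ∈ s, f i ≤ M) :
    ∑ i ∈ s, f i ^ 2 ≤ M * ∑ i ∈ s, f i := by
  rw [mul_sum]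
  exact sum_le_sum fun i hi => by nlinarith [hnn i hi, hle i hi]

lemma nonneg_of_wellSupported {ι : Type*} [Fintype ι] {A : Matrix ι ι ℝ} {C : Finset ι}
    {x : ι → ℝ} {ε : ℝ} (hsum : ∑ j ∈ C, x j = 1)
    (hws : ∀ i, 0 < x i → ∀ j, (A *ᵥ x) j - ε ≤ (A *ᵥ x) i) :
    0 ≤ ε := by
  obtain ⟨i, -, hi⟩ := exists_lt_of_sum_lt (s := C) (f := 0) (g := x) (by simp [hsum])
  linarith [hws i hi i]

section CliqueSupport

variable {ι : Type*} [Fintype ι] [DecidableEq ι] {A : Matrix ι ι ℝ} {C : Finset ι}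
  {δ ε : ℝ} {x : ι → ℝ}

lemma mulVec_apply_of_support_subset_clique
    (hA : ∀ i ∈ C, ∀ j ∈ C, A i j = if i = j then δ else 1)
    (hsupp : ∀ j, x j ≠ 0 → j ∈ C) (hsum : ∑ j ∈ C, x j = 1) {i : ι} (hi : i ∈ C) :
    (A *ᵥ x) i = 1 - (1 - δ) * x i := by
  have hterm : ∀ j ∈ C, A i j * x j = x j - (1 - δ) * if i = j then x j else 0 := by
    intro j hj
    rw [hA i hi j hj]
    split_ifs <;> ring
  rw [mulVec, dotProduct, ← Fintype.sum_subset fun j hj => hsupp j (right_ne_zero_of_mul hj),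
    sum_congr rfl hterm, sum_sub_distrib, ← mul_sum, sum_ite_eq, if_pos hi, hsum]

lemma dotProduct_mulVec_of_support_subset_clique
    (hA : ∀ i ∈ C, ∀ j ∈ C, A i j = if i = j then δ else 1)
    (hsupp : ∀ j, x j ≠ 0 → j ∈ C) (hsum : ∑ j ∈ C, x j = 1) :
    x ⬝ᵥ A *ᵥ x = 1 - (1 - δ) * ∑ i ∈ C, x i ^ 2 := by
  have hterm : ∀ i ∈ C, x i * (A *ᵥ x) i = x i - (1 - δ) * x i ^ 2 := fun i hi => by
    rw [mulVec_apply_of_support_subset_clique hA hsupp hsum hi]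
    ring
  rw [dotProduct, ← Fintype.sum_subset fun j hj => hsupp j (left_ne_zero_of_mul hj),
    sum_congr rfl hterm, sum_sub_distrib, ← mul_sum, hsum]

lemma sub_le_div_of_wellSupported (hδ : δ < 1) (hnn : ∀ i, 0 ≤ x i)
    (hA : ∀ i ∈ C, ∀ j ∈ C, A i j = if i = j then δ else 1)
    (hsupp : ∀ j, x j ≠ 0 → j ∈ C) (hsum : ∑ j ∈ C, x j = 1)
    (hws : ∀ i, 0 < x i → ∀ j, (A *ᵥ x) j - ε ≤ (A *ᵥ x) i)
    {i j : ι} (hi : i ∈ C) (hj : j ∈ C) :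
    x i ≤ x j + ε / (1 - δ) := by
  have hδ' : 0 < 1 - δ := sub_pos.mpr hδ
  rcases (hnn i).eq_or_lt with hzero | hpos
  · rw [← hzero]
    linarith [hnn j, div_nonneg (nonneg_of_wellSupported hsum hws) hδ'.le]
  · have h := hws i hpos j
    rw [mulVec_apply_of_support_subset_clique hA hsupp hsum hi,
      mulVec_apply_of_support_subset_clique hA hsupp hsum hj] at h
    have : (x i - x j) * (1 - δ) ≤ ε := by linarith
    linarith [(le_div_iff₀ hδ').mpr this]

lemma abs_sub_inv_card_le_of_wellSupported (hδ : δ < 1) (hnn : ∀ i, 0 ≤ x i)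
    (hA : ∀ i ∈ C, ∀ j ∈ C, A i j = if i = j then δ else 1)
    (hsupp : ∀ j, x j ≠ 0 → j ∈ C) (hsum : ∑ j ∈ C, x j = 1)
    (hws : ∀ i, 0 < x i → ∀ j, (A *ᵥ x) j - ε ≤ (A *ᵥ x) i) {i : ι} (hi : i ∈ C) :
    |x i - 1 / #C| ≤ ε / (1 - δ) := by
  simpa [hsum] using abs_sub_sum_div_card_le
    (fun i hi j hj => sub_le_div_of_wellSupported hδ hnn hA hsupp hsum hws hi hj) hi

lemma le_dotProduct_mulVec_of_wellSupported (hδ : δ < 1) (hnn : ∀ i, 0 ≤ x i)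
    (hA : ∀ i ∈ C, ∀ j ∈ C, A i j = if i = j then δ else 1)
    (hsupp : ∀ j, x j ≠ 0 → j ∈ C) (hsum : ∑ j ∈ C, x j = 1)
    (hws : ∀ i, 0 < x i → ∀ j, (A *ᵥ x) j - ε ≤ (A *ᵥ x) i) :
    1 - 1 / #C + δ / #C - ε ≤ x ⬝ᵥ A *ᵥ x := by
  have hδ' : 0 < 1 - δ := sub_pos.mpr hδ
  have hsq : ∑ i ∈ C, x i ^ 2 ≤ 1 / #C + ε / (1 - δ) := by
    simpa [hsum] using sum_sq_le_mul_sum (fun i _ => hnn i) fun i hi =>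
      sub_le_iff_le_add'.mp <| (le_abs_self _).trans <|
        abs_sub_inv_card_le_of_wellSupported hδ hnn hA hsupp hsum hws hi
  have hval := mul_le_mul_of_nonneg_left hsq hδ'.le
  rw [mul_add, mul_div_cancel₀ _ hδ'.ne'] at hval
  rw [dotProduct_mulVec_of_support_subset_clique hA hsupp hsum]
  have : (1 - δ) * (1 / #C) = 1 / #C - δ / #C := by ring
  linarith

end CliqueSupport

theorem stmt_14_general {n k : ℕ} (hk : 10 ≤ k) (G : SimpleGraph (Fin n)) [DecidableRel G.Adj]
    (C : Finset (Fin n)) (hC : G.IsClique (C : Set (Fin n))) (hCk : C.card = k)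
    (δ : ℝ) (hδ : δ ∈ Set.Ioo (0 : ℝ) 1)
    (Abar : Matrix (Fin n) (Fin n) ℝ)
    (hAbar : ∀ i j, Abar i j = if i = j then δ else if G.Adj i j then 1 else 0)
    (ε : ℝ) (xhat : Fin n → ℝ) (hxhat : xhat ∈ stdSimplex ℝ (Fin n))
    (hws : ∀ i, 0 < xhat i → ∀ j, (Abar.mulVec xhat) j - ε ≤ (Abar.mulVec xhat) i)
    (hsupp : ∀ i, 0 < xhat i → i ∈ C)
    (xs : Fin n → ℝ) (hxs : xs = fun i => if i ∈ C then (1 : ℝ) / k else 0) :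
    (∀ i, |xhat i - xs i| ≤ ((k - δ) / (1 - δ)) * ε) ∧
    xhat ⬝ᵥ Abar.mulVec xhat ≥ 1 - 1 / k + δ / k - ((k - δ) / (1 - δ)) * ε := by
  subst hxs hCk
  obtain ⟨hnn, hsum⟩ := hxhat
  have hA : ∀ i ∈ C, ∀ j ∈ C, Abar i j = if i = j then δ else 1 := fun i hi j hj => by
    rw [hAbar]
    split_ifs with h h' <;> first | rfl | exact absurd (hC hi hj h) h'
  have hsuppC : ∀ j, xhat j ≠ 0 → j ∈ C := fun j hj => hsupp j ((hnn j).lt_of_ne' hj)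
  have hsumC : ∑ j ∈ C, xhat j = 1 := (Fintype.sum_subset hsuppC).trans hsum
  have hε := nonneg_of_wellSupported hsumC hws
  have hδ' : 0 < 1 - δ := sub_pos.mpr hδ.2
  have hk' : (2 : ℝ) ≤ #C := by exact_mod_cast (by omega : 2 ≤ #C)
  have hdivB : ε / (1 - δ) ≤ (#C - δ) / (1 - δ) * ε := by
    rw [div_mul_eq_mul_div]
    gcongr
    exact le_mul_of_one_le_left hε (by linarith)
  have hεB : ε ≤ (#C - δ) / (1 - δ) * ε :=
    le_mul_of_one_le_left hε ((one_le_div hδ').mpr (by linarith))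
  refine ⟨fun i => ?_, ?_⟩
  · by_cases hi : i ∈ C
    · simpa [hi] using
        (abs_sub_inv_card_le_of_wellSupported hδ.2 hnn hA hsuppC hsumC hws hi).trans hdivB
    · simpa [hi, not_imp_comm.mp (hsuppC i) hi] using hε.trans hεB
  · linarith [le_dotProduct_mulVec_of_wellSupported hδ.2 hnn hA hsuppC hsumC hws]

theorem stmt_14 {n k : ℕ} (hk : 10 ≤ k) (G : SimpleGraph (Fin n)) [DecidableRel G.Adj]
    (hmax : ∀ S : Finset (Fin n), G.IsClique (S : Set (Fin n)) → S.card ≤ k)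
    (C : Finset (Fin n)) (hC : G.IsClique (C : Set (Fin n))) (hCk : C.card = k)
    (δ : ℝ) (hδ : δ ∈ Set.Ioo (0 : ℝ) 1)
    (Abar : Matrix (Fin n) (Fin n) ℝ)
    (hAbar : ∀ i j, Abar i j = if i = j then δ else if G.Adj i j then 1 else 0)
    (ε : ℝ) (xhat : Fin n → ℝ) (hxhat : xhat ∈ stdSimplex ℝ (Fin n))
    (hws : ∀ i, 0 < xhat i → ∀ j, (Abar.mulVec xhat) j - ε ≤ (Abar.mulVec xhat) i)
    (hsupp : ∀ i, 0 < xhat i → i ∈ C)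
    (xs : Fin n → ℝ) (hxs : xs = fun i => if i ∈ C then (1 : ℝ) / k else 0) :
    (∀ i, |xhat i - xs i| ≤ ((k - δ) / (1 - δ)) * ε) ∧
    xhat ⬝ᵥ Abar.mulVec xhat ≥ 1 - 1 / k + δ / k - ((k - δ) / (1 - δ)) * ε :=
  stmt_14_general hk G C hC hCk δ hδ Abar hAbar ε xhat hxhat hws hsupp xs hxs
end

section
/- Let Ā be the δ-diagonal adjacency matrix of a graph G on n ≥ k ≥ 10 vertices with maximum clique size k (Ā_{ii} = δ = 1/2, Ā_{ij} = 1 if adjacent, 0 otherwise), and ε < δ(1−δ)/(6n⁷). If (x̂, x̂) is a symmetric ε-well-supported Nash equilibrium of (Ā, Ā) whose support is NOT a clique of size k, then ⟨x̂, Ā x̂⟩ ≤ 1 − 1/k + δ/k − 2δ/(n²k⁴) + 2ε. -/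
/-!
Write `Ā = ½ I + A_G` and let `w = A_{Gᶜ} x̂`, the mass that each vertex sees among its
non-neighbours. Then `(Ā x̂)_i = 1 - x̂_i / 2 - w_i`, so the value of the game is `1 - Q/2 - W`
with `Q = ∑ x̂_i²` and `W = ⟨x̂, w⟩`, and the claim becomes `Q/2 + W ≥ 1/(2k) + 1/(n²k⁴) - ε`.
The Motzkin–Straus theorem gives `Q + W ≥ 1/k`, which settles the case `W ≥ 2/(n²k⁴)`.
Otherwise the vertices of weight above `1/(nk²)` form a clique `C` carrying mass at least
`1 - 1/k²`. If `|C| < k`, Cauchy–Schwarz on `C` gives `Q ≥ 1/k + 2/k⁶`. If `|C| = k`, the support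
is not `C`, so some supported `j ∉ C` misses a vertex `i ∈ C`, and well-supportedness at `j` gives
`x̂_i ≤ Q/2 + W + ε`. Either `x̂_i` is a bit more than `1/(2k)`, which suffices, or `x̂_i` is
small and Cauchy–Schwarz on `C \ {i}` again gives `Q ≥ 1/k + 2/k⁶`.
-/

open Matrix Finset

theorem dotProduct_le_of_mem_stdSimplex_s15 {ι : Type*} [Fintype ι] {x f : ι → ℝ}
    (hx : x ∈ stdSimplex ℝ ι) {c : ℝ} (hf : ∀ j, f j ≤ c) : x ⬝ᵥ f ≤ c :=
  calc x ⬝ᵥ f ≤ ∑ j, x j * c := sum_le_sum fun j _ => mul_le_mul_of_nonneg_left (hf j) (hx.1 j)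
    _ = c := by rw [← sum_mul, hx.2, one_mul]

theorem one_div_le_sum_sq {ι : Type*} [Fintype ι] {x : ι → ℝ} (hx : x ∈ stdSimplex ℝ ι) {k : ℕ}
    (hk : ({i | x i ≠ 0} : Finset ι).card ≤ k) : 1 / k ≤ ∑ i, x i ^ 2 := by
  set S : Finset ι := {i | x i ≠ 0}
  have hsum : ∑ i ∈ S, x i = 1 := by rw [sum_filter_ne_zero, hx.2]
  have hcs := sq_sum_le_card_mul_sum_sq (s := S) (f := x)
  rw [hsum, one_pow] at hcs
  have hSk : (S.card : ℝ) ≤ k := by exact_mod_cast hk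
  have hsub : ∑ i ∈ S, x i ^ 2 ≤ ∑ i, x i ^ 2 :=
    sum_le_sum_of_subset_of_nonneg (subset_univ S) fun i _ _ => sq_nonneg (x i)
  refine div_le_of_le_mul₀ k.cast_nonneg (sum_nonneg fun i _ => sq_nonneg (x i)) ?_
  nlinarith [sum_nonneg fun i (_ : i ∈ S) => sq_nonneg (x i)]

theorem one_sub_card_mul_le_sum_filter_lt {ι : Type*} [Fintype ι] {x : ι → ℝ}
    (hx : x ∈ stdSimplex ℝ ι) {θ : ℝ} (hθ : 0 ≤ θ) :
    1 - Fintype.card ι * θ ≤ ∑ i ∈ ({i | θ < x i} : Finset ι), x i := by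
  have hlight : ∑ i ∈ ({i | ¬ θ < x i} : Finset ι), x i ≤ Fintype.card ι * θ :=
    calc ∑ i ∈ ({i | ¬ θ < x i} : Finset ι), x i
        ≤ ∑ i ∈ ({i | ¬ θ < x i} : Finset ι), θ := sum_le_sum fun i hi => by simpa using hi
      _ ≤ Fintype.card ι * θ := by
        rw [sum_const, nsmul_eq_mul]
        exact mul_le_mul_of_nonneg_right (by exact_mod_cast card_le_univ _) hθ
  have hsplit := sum_filter_add_sum_filter_not univ (fun i => θ < x i) x
  rw [hx.2] at hsplit
  linarith

theorem one_div_add_two_div_pow_six_le {K m t Q : ℝ} (hK : 10 ≤ K) (hKm : K * m ≤ 51 / 100)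
    (hs : 1 - 1 / K ^ 2 ≤ m + t) (hQ : (K - 1) * m ^ 2 + t ^ 2 ≤ (K - 1) * Q) :
    1 / K + 2 / K ^ 6 ≤ Q := by
  have hK0 : 0 < K := by linarith
  have hK1 : 0 < K - 1 := by linarith
  have hinv : 1 / K ^ 2 ≤ 1 / 100 := by
    rw [div_le_div_iff₀ (by positivity) (by norm_num)]; nlinarith
  set s := m + t
  have hgap : 48 / 100 ≤ s - K * m := by linarith
  have hs2 : 1 - 2 * (1 / K ^ 2) ≤ s ^ 2 := by
    nlinarith [pow_le_pow_left₀ (by linarith) hs 2, sq_nonneg (1 / K ^ 2)]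
  -- Since `K m` stays well below `s ≈ 1`, the first square is bounded away from zero.
  have hid : K * ((K - 1) * m ^ 2 + t ^ 2) = (s - K * m) ^ 2 + (K - 1) * s ^ 2 := by
    simp only [s]; ring
  have hlow : 2304 / 10000 + (K - 1) * (1 - 2 * (1 / K ^ 2)) ≤ K * (K - 1) * Q := by
    nlinarith [mul_le_mul_of_nonneg_left hQ hK0.le, mul_le_mul_of_nonneg_left hs2 hK1.le]
  have h2 : (K - 1) / K ^ 2 ≤ 1 / 10 := by
    rw [div_le_div_iff₀ (by positivity) (by norm_num)]; nlinarith
  have h5 : (K - 1) / K ^ 5 ≤ 1 / 10000 := by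
    rw [div_le_div_iff₀ (by positivity) (by norm_num)]
    nlinarith [pow_le_pow_left₀ (by norm_num) hK 4]
  have e : K * (K - 1) * (1 / K + 2 / K ^ 6) = (K - 1) + 2 * ((K - 1) / K ^ 5) := by
    field_simp
  have e2 : (K - 1) * (1 - 2 * (1 / K ^ 2)) = (K - 1) - 2 * ((K - 1) / K ^ 2) := by ring
  have : K * (K - 1) * (1 / K + 2 / K ^ 6) ≤ K * (K - 1) * Q := by linarith
  exact le_of_mul_le_mul_left this (by positivity)

theorem one_div_add_two_div_pow_six_le_sum_sq {ι : Type*} [Fintype ι] {K : ℝ} (hK : 10 ≤ K)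
    {x : ι → ℝ} {D : Finset ι} (hD : (D.card : ℝ) ≤ K - 1) {m : ℝ} (hKm : K * m ≤ 51 / 100)
    (hs : 1 - 1 / K ^ 2 ≤ m + ∑ i ∈ D, x i) (hQ : m ^ 2 + ∑ i ∈ D, x i ^ 2 ≤ ∑ i, x i ^ 2) :
    1 / K + 2 / K ^ 6 ≤ ∑ i, x i ^ 2 := by
  refine one_div_add_two_div_pow_six_le hK hKm hs ?_
  have hcs := sq_sum_le_card_mul_sum_sq (s := D) (f := x)
  have hD2 := mul_le_mul_of_nonneg_right hD (sum_nonneg fun i (_ : i ∈ D) => sq_nonneg (x i))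
  nlinarith

namespace SimpleGraph

theorem exists_compl_adj_of_isClique_of_card_eq {V : Type*} [DecidableEq V] {G : SimpleGraph V}
    {k : ℕ} (hmax : ∀ S : Finset V, G.IsClique (S : Set V) → S.card ≤ k) {C : Finset V}
    (hC : G.IsClique (C : Set V)) (hCk : C.card = k) {j : V} (hj : j ∉ C) :
    ∃ i ∈ C, Gᶜ.Adj j i := by
  by_contra! hall
  have hins : G.IsClique ((insert j C : Finset V) : Set V) := by
    rw [coe_insert]
    refine hC.insert fun i hi hji => ?_
    by_contra hnadj
    exact hall i hi ((G.compl_adj j i).2 ⟨hji, hnadj⟩)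
  have := hmax _ hins
  rw [card_insert_of_notMem hj, hCk] at this
  omega

variable {V : Type*} [Fintype V] (G : SimpleGraph V) [DecidableRel G.Adj]

section CommRing

variable {R : Type*} [CommRing R]

theorem add_adjMatrix_mulVec_add_compl_adjMatrix_mulVec [DecidableEq V] (x : V → R) (i : V) :
    x i + (G.adjMatrix R *ᵥ x) i + (Gᶜ.adjMatrix R *ᵥ x) i = ∑ j, x j := by
  rw [show x i = ∑ j, if i = j then x j else 0 by simp]
  simp only [mulVec, dotProduct, adjMatrix_apply, ← sum_add_distrib]
  refine sum_congr rfl fun j _ => ?_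
  by_cases hij : i = j
  · subst hij; simp
  · by_cases hadj : G.Adj i j <;> simp [hij, hadj]

theorem sum_sq_add_dotProduct_adjMatrix_mulVec_add_compl [DecidableEq V] (x : V → R) :
    ∑ i, x i ^ 2 + x ⬝ᵥ G.adjMatrix R *ᵥ x + x ⬝ᵥ Gᶜ.adjMatrix R *ᵥ x = (∑ i, x i) ^ 2 := by
  simp only [dotProduct, sq, ← sum_add_distrib, sum_mul, ← mul_add,
    G.add_adjMatrix_mulVec_add_compl_adjMatrix_mulVec]

theorem dotProduct_adjMatrix_mulVec_add_smul_single_sub_single [DecidableEq V] {a b : V}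
    (hab : ¬ G.Adj a b) (x : V → R) (t : R) :
    (x + t • (Pi.single a 1 - Pi.single b 1)) ⬝ᵥ
        G.adjMatrix R *ᵥ (x + t • (Pi.single a 1 - Pi.single b 1)) =
      x ⬝ᵥ G.adjMatrix R *ᵥ x + 2 * t * ((G.adjMatrix R *ᵥ x) a - (G.adjMatrix R *ᵥ x) b) := by
  have hsymm : ∀ u v : V → R, u ⬝ᵥ G.adjMatrix R *ᵥ v = v ⬝ᵥ G.adjMatrix R *ᵥ u := by
    intro u v
    rw [dotProduct_mulVec, ← mulVec_transpose, transpose_adjMatrix, dotProduct_comm]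
  have hba : ¬ G.Adj b a := fun h => hab h.symm
  simp only [mulVec_add, mulVec_smul, add_dotProduct, dotProduct_add, smul_dotProduct,
    dotProduct_smul, hsymm x (Pi.single a 1 - Pi.single b 1)]
  simp [mulVec_sub, sub_dotProduct, dotProduct_sub, adjMatrix_apply, hab, hba]
  ring

end CommRing

theorem smul_one_add_adjMatrix_mulVec_apply [DecidableEq V] (δ : ℝ) {x : V → ℝ}
    (hx : ∑ i, x i = 1) (i : V) :
    ((δ • 1 + G.adjMatrix ℝ) *ᵥ x) i = 1 - (1 - δ) * x i - (Gᶜ.adjMatrix ℝ *ᵥ x) i := by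
  have := G.add_adjMatrix_mulVec_add_compl_adjMatrix_mulVec x i
  rw [hx] at this
  simp only [add_mulVec, smul_mulVec, one_mulVec, Pi.add_apply, Pi.smul_apply, smul_eq_mul]
  linarith

theorem dotProduct_smul_one_add_adjMatrix_mulVec [DecidableEq V] (δ : ℝ) {x : V → ℝ}
    (hx : ∑ i, x i = 1) :
    x ⬝ᵥ (δ • 1 + G.adjMatrix ℝ) *ᵥ x =
      1 - (1 - δ) * ∑ i, x i ^ 2 - x ⬝ᵥ Gᶜ.adjMatrix ℝ *ᵥ x := by
  simp only [dotProduct, G.smul_one_add_adjMatrix_mulVec_apply δ hx, mul_sub, sum_sub_distrib,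
    mul_one, hx, mul_sum]
  congr 2
  exact sum_congr rfl fun i _ => by ring

variable {G}

theorem adjMatrix_mulVec_nonneg {x : V → ℝ} (hx : 0 ≤ x) : 0 ≤ G.adjMatrix ℝ *ᵥ x :=
  fun i => by rw [adjMatrix_mulVec_apply]; exact sum_nonneg fun j _ => hx j

theorem le_adjMatrix_mulVec_apply {x : V → ℝ} (hx : 0 ≤ x) {i j : V} (hij : G.Adj i j) :
    x j ≤ (G.adjMatrix ℝ *ᵥ x) i := by
  rw [adjMatrix_mulVec_apply]
  exact single_le_sum (fun k _ => hx k) (by simpa using hij)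

theorem two_mul_mul_le_dotProduct_adjMatrix_mulVec {x : V → ℝ} (hx : 0 ≤ x) {i j : V}
    (hij : G.Adj i j) : 2 * (x i * x j) ≤ x ⬝ᵥ G.adjMatrix ℝ *ᵥ x := by
  have hxi := mul_le_mul_of_nonneg_left (le_adjMatrix_mulVec_apply hx hij) (hx i)
  have hxj := mul_le_mul_of_nonneg_left (le_adjMatrix_mulVec_apply hx hij.symm) (hx j)
  calc 2 * (x i * x j) ≤ x i * (G.adjMatrix ℝ *ᵥ x) i + x j * (G.adjMatrix ℝ *ᵥ x) j := by
        linarith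
    _ ≤ x ⬝ᵥ G.adjMatrix ℝ *ᵥ x :=
        add_le_sum (fun k _ => mul_nonneg (hx k) (adjMatrix_mulVec_nonneg hx k))
          (mem_univ i) (mem_univ j) hij.ne

theorem exists_mem_stdSimplex_support_ssubset_of_not_isClique [DecidableEq V] {x : V → ℝ}
    (hx : x ∈ stdSimplex ℝ V) (hS : ¬ G.IsClique (({i | x i ≠ 0} : Finset V) : Set V)) :
    ∃ y ∈ stdSimplex ℝ V, ({i | y i ≠ 0} : Finset V) ⊂ ({i | x i ≠ 0} : Finset V) ∧
      x ⬝ᵥ G.adjMatrix ℝ *ᵥ x ≤ y ⬝ᵥ G.adjMatrix ℝ *ᵥ y := by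
  obtain ⟨a, ha, b, hb, hab, hnadj⟩ : ∃ a, x a ≠ 0 ∧ ∃ b, x b ≠ 0 ∧ a ≠ b ∧ ¬ G.Adj a b := by
    simpa [IsClique, Set.Pairwise] using hS
  wlog hle : (G.adjMatrix ℝ *ᵥ x) b ≤ (G.adjMatrix ℝ *ᵥ x) a generalizing a b
  · exact this b hb a ha hab.symm (fun h => hnadj h.symm) (le_of_not_ge hle)
  set y := x + x b • (Pi.single a 1 - Pi.single b 1) with hy_def
  have hy : ∀ i, y i = if i = b then 0 else if i = a then x a + x b else x i := by
    intro i
    by_cases hib : i = b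
    · subst hib; simp [hy_def, Ne.symm hab]
    · by_cases hia : i = a
      · subst hia; simp [hy_def, hab]
      · simp [hy_def, hia, hib]
  refine ⟨y, ⟨fun i => ?_, ?_⟩, ?_, ?_⟩
  · rw [hy]
    split_ifs
    · exact le_rfl
    · exact add_nonneg (hx.1 a) (hx.1 b)
    · exact hx.1 i
  · simp [hy_def, sum_add_distrib, ← mul_sum, hx.2]
  · rw [ssubset_iff_of_subset]
    · exact ⟨b, by simpa using hb, by simp [hy]⟩
    · intro i
      simp only [mem_filter, mem_univ, true_and, hy]
      split_ifs with hib hia <;> simp_all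
  · rw [hy_def, dotProduct_adjMatrix_mulVec_add_smul_single_sub_single G hnadj]
    nlinarith [hx.1 b]

theorem motzkin_straus [DecidableEq V] {k : ℕ}
    (hmax : ∀ S : Finset V, G.IsClique (S : Set V) → S.card ≤ k) {x : V → ℝ}
    (hx : x ∈ stdSimplex ℝ V) : x ⬝ᵥ G.adjMatrix ℝ *ᵥ x ≤ 1 - 1 / k := by
  induction hN : ({i | x i ≠ 0} : Finset V).card using Nat.strong_induction_on generalizing x
    with | _ N ih
  by_cases hS : G.IsClique (({i | x i ≠ 0} : Finset V) : Set V)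
  · have hid := G.sum_sq_add_dotProduct_adjMatrix_mulVec_add_compl x
    rw [hx.2, one_pow] at hid
    have hcompl := dotProduct_nonneg_of_nonneg hx.1 (adjMatrix_mulVec_nonneg (G := Gᶜ) hx.1)
    linarith [one_div_le_sum_sq hx (hmax _ hS)]
  · obtain ⟨y, hy, hsub, hle⟩ := exists_mem_stdSimplex_support_ssubset_of_not_isClique hx hS
    exact hle.trans (ih _ (hN ▸ card_lt_card hsub) hy rfl)

theorem isClique_filter_lt_of_dotProduct_compl_lt [DecidableEq V] {x : V → ℝ} (hx : 0 ≤ x)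
    {θ : ℝ} (hθ : 0 ≤ θ) (hW : x ⬝ᵥ Gᶜ.adjMatrix ℝ *ᵥ x < 2 * θ ^ 2) :
    G.IsClique (({i | θ < x i} : Finset V) : Set V) := by
  intro i hi j hj hij
  simp only [coe_filter, mem_univ, true_and, Set.mem_ofPred_eq] at hi hj
  by_contra hnadj
  have hcompl : Gᶜ.Adj i j := (G.compl_adj i j).2 ⟨hij, hnadj⟩
  have := two_mul_mul_le_dotProduct_adjMatrix_mulVec hx hcompl
  nlinarith [mul_lt_mul'' hi hj hθ hθ]

theorem one_div_two_mul_add_le_of_isClique_filter_lt [DecidableEq V] {k : ℕ} (hk : 10 ≤ k)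
    (hmax : ∀ S : Finset V, G.IsClique (S : Set V) → S.card ≤ k) {x : V → ℝ}
    (hx : x ∈ stdSimplex ℝ V) {ε : ℝ} (hε : 0 ≤ ε)
    (hws : ∀ j, 0 < x j → x j / 2 + (Gᶜ.adjMatrix ℝ *ᵥ x) j ≤
      (∑ i, x i ^ 2) / 2 + x ⬝ᵥ Gᶜ.adjMatrix ℝ *ᵥ x + ε)
    (hnot : ¬ ∃ C : Finset V, G.IsClique (C : Set V) ∧ C.card = k ∧ ∀ i, 0 < x i ↔ i ∈ C)
    {θ : ℝ} (hθ : 0 ≤ θ) (hC : G.IsClique (({i | θ < x i} : Finset V) : Set V))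
    (hs : 1 - 1 / (k : ℝ) ^ 2 ≤ ∑ i ∈ ({i | θ < x i} : Finset V), x i) :
    1 / (2 * k) + 1 / (k : ℝ) ^ 6 - ε ≤
      (∑ i, x i ^ 2) / 2 + x ⬝ᵥ Gᶜ.adjMatrix ℝ *ᵥ x := by
  set C : Finset V := {i | θ < x i}
  set Q := ∑ i, x i ^ 2
  set W := x ⬝ᵥ Gᶜ.adjMatrix ℝ *ᵥ x
  have hW : 0 ≤ W := dotProduct_nonneg_of_nonneg hx.1 (adjMatrix_mulVec_nonneg hx.1)
  have hK : (10 : ℝ) ≤ k := by exact_mod_cast hk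
  have hsix : 1 / (k : ℝ) ^ 6 ≤ 1 / k / 100 := by
    rw [div_div, div_le_div_iff₀ (by positivity) (by positivity)]
    nlinarith [pow_le_pow_left₀ (by norm_num) hK 5]
  have hhalf : 1 / (2 * (k : ℝ)) = 1 / k / 2 := by ring
  have hCQ : ∀ D ⊆ C, ∑ i ∈ D, x i ^ 2 ≤ Q := fun D _ =>
    sum_le_sum_of_subset_of_nonneg (subset_univ D) fun i _ _ => sq_nonneg (x i)
  suffices h : 1 / k + 2 / (k : ℝ) ^ 6 ≤ Q ∨ 51 / 100 ≤ k * (Q / 2 + W + ε) by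
    have htwo : 2 / (k : ℝ) ^ 6 = 2 * (1 / k ^ 6) := by ring
    have h51 : 51 / 100 / (k : ℝ) = 51 / 100 * (1 / k) := by ring
    rcases h with h | h
    · linarith
    · rw [← div_le_iff₀' (by positivity)] at h
      linarith
  rcases (hmax C hC).lt_or_eq with hlt | heq
  · left
    refine one_div_add_two_div_pow_six_le_sum_sq hK (D := C) (m := 0) ?_ (by norm_num)
      (by simpa using hs) (by simpa using hCQ C subset_rfl)
    rw [le_sub_iff_add_le]
    exact_mod_cast hlt
  obtain ⟨j, hj, hjC⟩ : ∃ j, 0 < x j ∧ j ∉ C := by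
    by_contra! hall
    refine hnot ⟨C, hC, heq, fun i => ⟨hall i, fun hi => hθ.trans_lt ?_⟩⟩
    simpa [C] using hi
  obtain ⟨i, hiC, hji⟩ := exists_compl_adj_of_isClique_of_card_eq hmax hC heq hjC
  have hxi : x i ≤ Q / 2 + W + ε := by
    linarith [le_adjMatrix_mulVec_apply hx.1 hji, hws j hj, hx.1 j]
  by_cases hbig : 51 / 100 ≤ k * x i
  · right
    nlinarith
  left
  refine one_div_add_two_div_pow_six_le_sum_sq hK (D := C.erase i) (m := x i) ?_
    (not_le.1 hbig).le ?_ ?_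
  · rw [card_erase_of_mem hiC, heq, Nat.cast_sub (by omega)]
    simp
  · rwa [add_sum_erase C x hiC]
  · rw [add_sum_erase C (fun i => x i ^ 2) hiC]
    exact hCQ C subset_rfl

theorem one_div_two_mul_add_le_half_sum_sq_add [DecidableEq V] {k : ℕ} (hk : 10 ≤ k)
    (hkn : k ≤ Fintype.card V) (hmax : ∀ S : Finset V, G.IsClique (S : Set V) → S.card ≤ k)
    {x : V → ℝ} (hx : x ∈ stdSimplex ℝ V) {ε : ℝ} (hε : 0 ≤ ε)
    (hws : ∀ j, 0 < x j → x j / 2 + (Gᶜ.adjMatrix ℝ *ᵥ x) j ≤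
      (∑ i, x i ^ 2) / 2 + x ⬝ᵥ Gᶜ.adjMatrix ℝ *ᵥ x + ε)
    (hnot : ¬ ∃ C : Finset V, G.IsClique (C : Set V) ∧ C.card = k ∧ ∀ i, 0 < x i ↔ i ∈ C) :
    1 / (2 * k) + 1 / ((Fintype.card V : ℝ) ^ 2 * (k : ℝ) ^ 4) - ε ≤
      (∑ i, x i ^ 2) / 2 + x ⬝ᵥ Gᶜ.adjMatrix ℝ *ᵥ x := by
  set N : ℝ := (Fintype.card V : ℝ)
  set Q := ∑ i, x i ^ 2
  set W := x ⬝ᵥ Gᶜ.adjMatrix ℝ *ᵥ x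
  have hK : (10 : ℝ) ≤ k := by exact_mod_cast hk
  have hKN : (k : ℝ) ≤ N := by simp only [N]; exact_mod_cast hkn
  have hN : 0 < N := by linarith
  have hhalf : 1 / (2 * (k : ℝ)) = 1 / k / 2 := by ring
  have hMS : 1 / k ≤ Q + W := by
    have hid := G.sum_sq_add_dotProduct_adjMatrix_mulVec_add_compl x
    rw [hx.2, one_pow] at hid
    linarith [motzkin_straus hmax hx]
  set θ : ℝ := 1 / (N * k ^ 2)
  have hθ : 0 ≤ θ := by positivity
  have hθ2 : 2 * θ ^ 2 = 2 * (1 / (N ^ 2 * k ^ 4)) := by ring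
  by_cases hW : 2 * θ ^ 2 ≤ W
  · linarith
  have hC := isClique_filter_lt_of_dotProduct_compl_lt hx.1 hθ (not_le.1 hW)
  have hs := one_sub_card_mul_le_sum_filter_lt hx hθ
  have hNθ : N * θ = 1 / k ^ 2 := by
    simp only [θ]; field_simp
  rw [hNθ] at hs
  have hNK : 1 / (N ^ 2 * k ^ 4) ≤ 1 / (k : ℝ) ^ 6 := by
    rw [div_le_div_iff₀ (by positivity) (by positivity), one_mul, one_mul]
    calc (k : ℝ) ^ 6 = k ^ 2 * k ^ 4 := by ring
      _ ≤ N ^ 2 * k ^ 4 := by gcongr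
  linarith [one_div_two_mul_add_le_of_isClique_filter_lt hk hmax hx hε hws hnot hθ hC hs]

end SimpleGraph

theorem stmt_15_general {n k : ℕ} (hk : 10 ≤ k) (hkn : k ≤ n)
    (G : SimpleGraph (Fin n)) [DecidableRel G.Adj]
    (hmax : ∀ S : Finset (Fin n), G.IsClique (S : Set (Fin n)) → S.card ≤ k)
    (δ : ℝ) (hδ : δ = 1 / 2)
    (Abar : Matrix (Fin n) (Fin n) ℝ)
    (hAbar : ∀ i j, Abar i j = if i = j then δ else if G.Adj i j then 1 else 0)
    (ε : ℝ) (hε : 0 < ε)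
    (xhat : Fin n → ℝ) (hxhat : xhat ∈ stdSimplex ℝ (Fin n))
    (hws : ∀ i, 0 < xhat i → ∀ j, (Abar.mulVec xhat) j - ε ≤ (Abar.mulVec xhat) i)
    (hnotclique : ¬ ∃ C : Finset (Fin n), G.IsClique (C : Set (Fin n)) ∧ C.card = k ∧
      (∀ i, 0 < xhat i ↔ i ∈ C)) :
    xhat ⬝ᵥ Abar.mulVec xhat
      ≤ 1 - 1 / k + δ / k - 2 * δ / ((n : ℝ) ^ 2 * (k : ℝ) ^ 4) + 2 * ε := by
  subst hδ
  have hA : Abar = (1 / 2 : ℝ) • 1 + G.adjMatrix ℝ := by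
    ext i j
    by_cases h : i = j
    · subst h; simp [hAbar]
    · simp [hAbar, h, SimpleGraph.adjMatrix_apply, one_apply]
  have hrow := G.smul_one_add_adjMatrix_mulVec_apply (1 / 2) hxhat.2
  have hval := G.dotProduct_smul_one_add_adjMatrix_mulVec (1 / 2) hxhat.2
  rw [← hA] at hrow hval
  have hsupp : ∀ j, 0 < xhat j → xhat j / 2 + (Gᶜ.adjMatrix ℝ *ᵥ xhat) j ≤
      (∑ i, xhat i ^ 2) / 2 + xhat ⬝ᵥ Gᶜ.adjMatrix ℝ *ᵥ xhat + ε := by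
    intro j hj
    have := dotProduct_le_of_mem_stdSimplex_s15 hxhat fun i => (by linarith [hws j hj i] :
      (Abar *ᵥ xhat) i ≤ (Abar *ᵥ xhat) j + ε)
    rw [hval, hrow] at this
    linarith
  have key := G.one_div_two_mul_add_le_half_sum_sq_add hk (by simpa using hkn) hmax hxhat hε.le
    hsupp hnotclique
  rw [Fintype.card_fin] at key
  have e1 : 1 - 1 / (k : ℝ) + 1 / 2 / k = 1 - 1 / (2 * k) := by ring
  have e2 : 2 * (1 / 2) / ((n : ℝ) ^ 2 * k ^ 4) = 1 / (n ^ 2 * k ^ 4) := by ring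
  rw [hval, e1, e2]
  linarith

theorem stmt_15 {n k : ℕ} (hk : 10 ≤ k) (hkn : k ≤ n)
    (G : SimpleGraph (Fin n)) [DecidableRel G.Adj]
    (hmax : ∀ S : Finset (Fin n), G.IsClique (S : Set (Fin n)) → S.card ≤ k)
    (hex : ∃ S : Finset (Fin n), G.IsClique (S : Set (Fin n)) ∧ S.card = k)
    (δ : ℝ) (hδ : δ = 1 / 2)
    (Abar : Matrix (Fin n) (Fin n) ℝ)
    (hAbar : ∀ i j, Abar i j = if i = j then δ else if G.Adj i j then 1 else 0)
    (ε : ℝ) (hε : 0 < ε) (hεsmall : ε < δ * (1 - δ) / (6 * (n : ℝ) ^ 7))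
    (xhat : Fin n → ℝ) (hxhat : xhat ∈ stdSimplex ℝ (Fin n))
    (hws : ∀ i, 0 < xhat i → ∀ j, (Abar.mulVec xhat) j - ε ≤ (Abar.mulVec xhat) i)
    (hnotclique : ¬ ∃ C : Finset (Fin n), G.IsClique (C : Set (Fin n)) ∧ C.card = k ∧
      (∀ i, 0 < xhat i ↔ i ∈ C)) :
    xhat ⬝ᵥ Abar.mulVec xhat
      ≤ 1 - 1 / k + δ / k - 2 * δ / ((n : ℝ) ^ 2 * (k : ℝ) ^ 4) + 2 * ε :=
  stmt_15_general hk hkn G hmax δ hδ Abar hAbar ε hε xhat hxhat hws hnotclique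
end

section
/- In the 6-player team zero-sum game with utility u(x,y,z,x̂,ŷ,ẑ) = ⟨x,Ay⟩ − ⟨x̂,Aŷ⟩ + ⟨x,Cx̂⟩ + δ(x,y,ẑ) − δ(x̂,ŷ,z), where A = Aᵀ has entries ≤ −1, C is skew-symmetric, and δ(x,y,z) = (|A_min|/ε)Σᵢ(z_i(x_i−y_i) + z_{n+i}(y_i−x_i)) + |A_min|z_{2n+1}: if (x*,y*,z*,x̂*,ŷ*,ẑ*) is an ε²-Nash equilibrium with ε² ≤ 1/2, then ‖x* − y*‖_∞ ≤ 2ε and ‖x̂* − ŷ*‖_∞ ≤ 2ε. -/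
open Matrix Finset

/-- The auxiliary symmetry-enforcing term `δ(x, y, z)`. -/
noncomputable def deltaFun {n : ℕ} (Amin ε : ℝ)
    (x y : Fin n → ℝ) (z : AdvIdx n → ℝ) : ℝ :=
  (|Amin| / ε) * ∑ i : Fin n,
      (z (Sum.inl (Sum.inl i)) * (x i - y i) + z (Sum.inl (Sum.inr i)) * (y i - x i))
    + |Amin| * z (Sum.inr ())

/-- Utility of the second team in the 6-player (3 vs 3) team zero-sum game. -/
noncomputable def teamUtil {n : ℕ} (A C : Matrix (Fin n) (Fin n) ℝ) (Amin ε : ℝ)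
    (x y : Fin n → ℝ) (z : AdvIdx n → ℝ)
    (xh yh : Fin n → ℝ) (zh : AdvIdx n → ℝ) : ℝ :=
  x ⬝ᵥ A.mulVec y - xh ⬝ᵥ A.mulVec yh + x ⬝ᵥ C.mulVec xh
    + deltaFun Amin ε x y zh - deltaFun Amin ε xh yh z

/-!
Against a fixed pair `(x, y)`, the `zh`-player's vertex `e_i` (resp. `e_{n+i}`) pays
`|Amin| (x_i - y_i) / ε` (resp. `|Amin| (y_i - x_i) / ε`), so a large gap would be detected.
On the other hand the `y`-player may copy `x`: this collapses `δ(x, ·, zh)` to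
`|Amin| zh_{2n+1} ≤ |Amin|` and changes `⟨x, Ay⟩` by at most `|Amin| - 1`, so at an
`ε²`-equilibrium `δ(x, y, zh) ≤ 2|Amin| - 1 + ε²`. Since `ε² ≤ 1/2`, every vertex then pays at
most `2|Amin|`, i.e. `|x_i - y_i| ≤ 2ε`. Swapping the two teams (and `C` with `-Cᵀ`) negates the
utility, which gives the same bound for `(x̂, ŷ)`.
-/

section StdSimplex

variable {ι κ : Type*} [Fintype ι] [Fintype κ] {x : ι → ℝ} {y : κ → ℝ}

lemma dotProduct_le_of_mem_stdSimplex_s18 (hx : x ∈ stdSimplex ℝ ι) {v : ι → ℝ} {b : ℝ}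
    (hv : ∀ i, v i ≤ b) : x ⬝ᵥ v ≤ b :=
  calc x ⬝ᵥ v ≤ ∑ i, x i * b := sum_le_sum fun i _ => mul_le_mul_of_nonneg_left (hv i) (hx.1 i)
    _ = b := by rw [← sum_mul, hx.2, one_mul]

lemma le_dotProduct_of_mem_stdSimplex_s18 (hx : x ∈ stdSimplex ℝ ι) {v : ι → ℝ} {a : ℝ}
    (hv : ∀ i, a ≤ v i) : a ≤ x ⬝ᵥ v :=
  calc a = ∑ i, x i * a := by rw [← sum_mul, hx.2, one_mul]
    _ ≤ x ⬝ᵥ v := sum_le_sum fun i _ => mul_le_mul_of_nonneg_left (hv i) (hx.1 i)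

lemma dotProduct_mulVec_le_of_mem_stdSimplex_s18 (hx : x ∈ stdSimplex ℝ ι)
    (hy : y ∈ stdSimplex ℝ κ) {A : Matrix ι κ ℝ} {b : ℝ} (hA : ∀ i j, A i j ≤ b) :
    x ⬝ᵥ A *ᵥ y ≤ b :=
  dotProduct_le_of_mem_stdSimplex_s18 hx fun i =>
    (dotProduct_comm _ _).trans_le (dotProduct_le_of_mem_stdSimplex_s18 hy (hA i))

lemma le_dotProduct_mulVec_of_mem_stdSimplex_s18 (hx : x ∈ stdSimplex ℝ ι)
    (hy : y ∈ stdSimplex ℝ κ) {A : Matrix ι κ ℝ} {a : ℝ} (hA : ∀ i j, a ≤ A i j) :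
    a ≤ x ⬝ᵥ A *ᵥ y :=
  le_dotProduct_of_mem_stdSimplex_s18 hx fun i =>
    (le_dotProduct_of_mem_stdSimplex_s18 hy (hA i)).trans_eq (dotProduct_comm _ _)

end StdSimplex

section Delta

variable {n : ℕ} (Amin ε : ℝ) (x y : Fin n → ℝ)

lemma deltaFun_self (z : AdvIdx n → ℝ) : deltaFun Amin ε x x z = |Amin| * z (Sum.inr ()) := by
  simp [deltaFun]

lemma deltaFun_single_inl_inl (i : Fin n) :
    deltaFun Amin ε x y (Pi.single (Sum.inl (Sum.inl i)) 1) = |Amin| / ε * (x i - y i) := by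
  simp [deltaFun, Pi.single_apply]

lemma deltaFun_single_inl_inr (i : Fin n) :
    deltaFun Amin ε x y (Pi.single (Sum.inl (Sum.inr i)) 1) = |Amin| / ε * (y i - x i) := by
  simp [deltaFun, Pi.single_apply]

variable {Amin ε x y}

lemma abs_sub_le_of_forall_deltaFun_le (hAmin : Amin ≠ 0) (hε : 0 < ε)
    (h : ∀ z ∈ stdSimplex ℝ (AdvIdx n), deltaFun Amin ε x y z ≤ 2 * |Amin|) (i : Fin n) :
    |x i - y i| ≤ 2 * ε := by
  have hA : 0 < |Amin| := abs_pos.2 hAmin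
  have key : ∀ t : ℝ, |Amin| / ε * t ≤ 2 * |Amin| → t ≤ 2 * ε := fun t ht => by
    rw [div_mul_eq_mul_div, div_le_iff₀ hε, mul_assoc, mul_left_comm] at ht
    exact le_of_mul_le_mul_left ht hA
  have h₁ := h _ (single_mem_stdSimplex ℝ (Sum.inl (Sum.inl i)))
  have h₂ := h _ (single_mem_stdSimplex ℝ (Sum.inl (Sum.inr i)))
  rw [deltaFun_single_inl_inl] at h₁
  rw [deltaFun_single_inl_inr] at h₂
  exact abs_sub_le_iff.2 ⟨key _ h₁, key _ h₂⟩

end Delta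

lemma teamUtil_swap {n : ℕ} (A C : Matrix (Fin n) (Fin n) ℝ) (Amin ε : ℝ)
    (x y : Fin n → ℝ) (z : AdvIdx n → ℝ) (xh yh : Fin n → ℝ) (zh : AdvIdx n → ℝ) :
    teamUtil A (-Cᵀ) Amin ε xh yh zh x y z = -teamUtil A C Amin ε x y z xh yh zh := by
  have hC : xh ⬝ᵥ (-Cᵀ) *ᵥ x = -(x ⬝ᵥ C *ᵥ xh) := by
    rw [neg_mulVec, dotProduct_neg, dotProduct_mulVec, vecMul_transpose, dotProduct_comm]
  simp only [teamUtil, hC]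
  ring

lemma abs_sub_le_of_nash {n : ℕ} {A C : Matrix (Fin n) (Fin n) ℝ} {Amin ε : ℝ}
    (hA : ∀ i j, A i j ≤ -1) (hAmin : Amin < 0) (hAmin_le : ∀ i j, Amin ≤ A i j)
    (hε : 0 < ε) (hε2 : ε ^ 2 ≤ 1 / 2) {x y xh yh : Fin n → ℝ} {z zh : AdvIdx n → ℝ}
    (hx : x ∈ stdSimplex ℝ (Fin n)) (hy : y ∈ stdSimplex ℝ (Fin n))
    (hzh : zh ∈ stdSimplex ℝ (AdvIdx n))
    (hNashy : ∀ y' ∈ stdSimplex ℝ (Fin n),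
      teamUtil A C Amin ε x y z xh yh zh ≤ teamUtil A C Amin ε x y' z xh yh zh + ε ^ 2)
    (hNashzh : ∀ zh' ∈ stdSimplex ℝ (AdvIdx n),
      teamUtil A C Amin ε x y z xh yh zh' ≤ teamUtil A C Amin ε x y z xh yh zh + ε ^ 2)
    (i : Fin n) : |x i - y i| ≤ 2 * ε := by
  have habs : |Amin| = -Amin := abs_of_neg hAmin
  have hxx : x ⬝ᵥ A *ᵥ x ≤ -1 := dotProduct_mulVec_le_of_mem_stdSimplex_s18 hx hx hA
  have hxy : Amin ≤ x ⬝ᵥ A *ᵥ y := le_dotProduct_mulVec_of_mem_stdSimplex_s18 hx hy hAmin_le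
  have hzh_last : zh (Sum.inr ()) ≤ 1 := (mem_Icc_of_mem_stdSimplex hzh _).2
  have hcopy := hNashy x hx
  simp only [teamUtil, deltaFun_self, habs] at hcopy
  have hδ : deltaFun Amin ε x y zh ≤ 2 * |Amin| - 1 + ε ^ 2 := by
    rw [habs]
    nlinarith
  refine abs_sub_le_of_forall_deltaFun_le hAmin.ne hε (fun zh' hzh' => ?_) i
  have hbest := hNashzh zh' hzh'
  simp only [teamUtil] at hbest
  linarith

theorem stmt_18_general {n : ℕ} (A C : Matrix (Fin n) (Fin n) ℝ)
    (hentries : ∀ i j, A i j ≤ -1)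
    (Amin : ℝ) (hAmin : IsLeast {r : ℝ | ∃ i j, A i j = r} Amin)
    (ε : ℝ) (hε : 0 < ε) (hε2 : ε ^ 2 ≤ 1 / 2)
    (xs ys xhs yhs : Fin n → ℝ) (zs zhs : AdvIdx n → ℝ)
    (hxs : xs ∈ stdSimplex ℝ (Fin n)) (hys : ys ∈ stdSimplex ℝ (Fin n))
    (hzs : zs ∈ stdSimplex ℝ (AdvIdx n))
    (hxhs : xhs ∈ stdSimplex ℝ (Fin n)) (hyhs : yhs ∈ stdSimplex ℝ (Fin n))
    (hzhs : zhs ∈ stdSimplex ℝ (AdvIdx n))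
    -- team (x, y, z) receives `-u`, i.e. minimizes `u`
    (hNashy : ∀ y' ∈ stdSimplex ℝ (Fin n),
      teamUtil A C Amin ε xs ys zs xhs yhs zhs
        ≤ teamUtil A C Amin ε xs y' zs xhs yhs zhs + ε ^ 2)
    (hNashz : ∀ z' ∈ stdSimplex ℝ (AdvIdx n),
      teamUtil A C Amin ε xs ys zs xhs yhs zhs
        ≤ teamUtil A C Amin ε xs ys z' xhs yhs zhs + ε ^ 2)
    -- team (xh, yh, zh) receives `u`, i.e. maximizes `u`
    (hNashyh : ∀ yh' ∈ stdSimplex ℝ (Fin n),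
      teamUtil A C Amin ε xs ys zs xhs yh' zhs
        ≤ teamUtil A C Amin ε xs ys zs xhs yhs zhs + ε ^ 2)
    (hNashzh : ∀ zh' ∈ stdSimplex ℝ (AdvIdx n),
      teamUtil A C Amin ε xs ys zs xhs yhs zh'
        ≤ teamUtil A C Amin ε xs ys zs xhs yhs zhs + ε ^ 2) :
    (∀ i, |xs i - ys i| ≤ 2 * ε) ∧ (∀ i, |xhs i - yhs i| ≤ 2 * ε) := by
  obtain ⟨⟨i₀, j₀, hAmin_eq⟩, hAmin_lb⟩ := hAmin
  have hAmin_neg : Amin < 0 := by linarith [hAmin_eq ▸ hentries i₀ j₀]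
  have hAmin_le_entry : ∀ i j, Amin ≤ A i j := fun i j => hAmin_lb ⟨i, j, rfl⟩
  refine ⟨abs_sub_le_of_nash hentries hAmin_neg hAmin_le_entry hε hε2 hxs hys hzhs
    hNashy hNashzh, abs_sub_le_of_nash (C := -Cᵀ) (xh := xs) (yh := ys) (z := zhs) hentries
    hAmin_neg hAmin_le_entry hε hε2 hxhs hyhs hzs (fun yh' hyh' => ?_) (fun z' hz' => ?_)⟩
  · simp only [teamUtil_swap]
    linarith [hNashyh yh' hyh']
  · simp only [teamUtil_swap]
    linarith [hNashz z' hz']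

theorem stmt_18 {n : ℕ} (A C : Matrix (Fin n) (Fin n) ℝ)
    (hsym : A = Aᵀ) (hentries : ∀ i j, A i j ≤ -1) (hskew : C = -Cᵀ)
    (Amin : ℝ) (hAmin : IsLeast {r : ℝ | ∃ i j, A i j = r} Amin)
    (ε : ℝ) (hε : 0 < ε) (hε2 : ε ^ 2 ≤ 1 / 2)
    (xs ys xhs yhs : Fin n → ℝ) (zs zhs : AdvIdx n → ℝ)
    (hxs : xs ∈ stdSimplex ℝ (Fin n)) (hys : ys ∈ stdSimplex ℝ (Fin n))
    (hzs : zs ∈ stdSimplex ℝ (AdvIdx n))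
    (hxhs : xhs ∈ stdSimplex ℝ (Fin n)) (hyhs : yhs ∈ stdSimplex ℝ (Fin n))
    (hzhs : zhs ∈ stdSimplex ℝ (AdvIdx n))
    -- team (x, y, z) receives `-u`, i.e. minimizes `u`
    (hNashx : ∀ x' ∈ stdSimplex ℝ (Fin n),
      teamUtil A C Amin ε xs ys zs xhs yhs zhs
        ≤ teamUtil A C Amin ε x' ys zs xhs yhs zhs + ε ^ 2)
    (hNashy : ∀ y' ∈ stdSimplex ℝ (Fin n),
      teamUtil A C Amin ε xs ys zs xhs yhs zhs
        ≤ teamUtil A C Amin ε xs y' zs xhs yhs zhs + ε ^ 2)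
    (hNashz : ∀ z' ∈ stdSimplex ℝ (AdvIdx n),
      teamUtil A C Amin ε xs ys zs xhs yhs zhs
        ≤ teamUtil A C Amin ε xs ys z' xhs yhs zhs + ε ^ 2)
    -- team (xh, yh, zh) receives `u`, i.e. maximizes `u`
    (hNashxh : ∀ xh' ∈ stdSimplex ℝ (Fin n),
      teamUtil A C Amin ε xs ys zs xh' yhs zhs
        ≤ teamUtil A C Amin ε xs ys zs xhs yhs zhs + ε ^ 2)
    (hNashyh : ∀ yh' ∈ stdSimplex ℝ (Fin n),
      teamUtil A C Amin ε xs ys zs xhs yh' zhs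
        ≤ teamUtil A C Amin ε xs ys zs xhs yhs zhs + ε ^ 2)
    (hNashzh : ∀ zh' ∈ stdSimplex ℝ (AdvIdx n),
      teamUtil A C Amin ε xs ys zs xhs yhs zh'
        ≤ teamUtil A C Amin ε xs ys zs xhs yhs zhs + ε ^ 2) :
    (∀ i, |xs i - ys i| ≤ 2 * ε) ∧ (∀ i, |xhs i - yhs i| ≤ 2 * ε) :=
  stmt_18_general A C hentries Amin hAmin ε hε hε2 xs ys xhs yhs zs zhs hxs hys hzs hxhs hyhs hzhs
    hNashy hNashz hNashyh hNashzh
end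

section
/- Let R ∈ ℝ^{n×n}, A = (R+Rᵀ)/2, C = (R−Rᵀ)/2, and suppose x*, x̂* ∈ Δⁿ satisfy: for all y' ∈ Δⁿ, ⟨x*, A x*⟩ + (1/2)⟨x*, C x̂*⟩ ≤ ⟨y', A x*⟩ + (1/2)⟨y', C x̂*⟩ + η, and for all x̂' ∈ Δⁿ, −⟨x̂*, A x̂*⟩ + (1/2)⟨x*, C x̂*⟩ ≥ −⟨x̂', A x̂*⟩ + (1/2)⟨x*, C x̂'⟩ − η. If additionally x* = x̂*, then for the matrix R' with A = −(R'+R'ᵀ)/2 and C = R'ᵀ − R' the point (x*, x*) is a symmetric 2η-Nash equilibrium of the symmetric game (R', R'ᵀ): for all x̂' ∈ Δⁿ, ⟨x̂', R' x*⟩ ≤ ⟨x*, R' x*⟩ + 2η. -/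
/-! Since `R' = -A - C/2` and `C = R'ᵀ - R'` has `⟨x*, C x*⟩ = 0`, the first variational
inequality at `x̂* = x*` reads `⟨y', R' x*⟩ ≤ ⟨x*, R' x*⟩ + η`; taking `y' = x*` in it gives
`η ≥ 0`, hence the bound `2η`. -/

open Matrix

lemma Matrix.dotProduct_transpose_sub_self_mulVec_self {α : Type*} [Fintype α] {K : Type*}
    [CommRing K] (M : Matrix α α K) (x : α → K) : x ⬝ᵥ (Mᵀ - M) *ᵥ x = 0 := by
  rw [sub_mulVec, dotProduct_sub, ← vecMul_transpose, transpose_transpose, dotProduct_comm,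
    ← dotProduct_mulVec, sub_self]

lemma Matrix.eq_neg_sub_half_smul_of_symm_skew_parts {α : Type*} [Fintype α]
    {A C M : Matrix α α ℝ} (hA : A = - ((1 / 2 : ℝ) • (M + Mᵀ))) (hC : C = Mᵀ - M) :
    M = -A - (1 / 2 : ℝ) • C := by
  rw [hA, hC]
  module

theorem stmt_19_general {n : ℕ}
    (A C : Matrix (Fin n) (Fin n) ℝ)
    (η : ℝ) (xs xhs : Fin n → ℝ)
    (hxs : xs ∈ stdSimplex ℝ (Fin n))
    (hVI1 : ∀ y' ∈ stdSimplex ℝ (Fin n),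
      xs ⬝ᵥ A.mulVec xs + (1 / 2) * (xs ⬝ᵥ C.mulVec xhs)
        ≤ y' ⬝ᵥ A.mulVec xs + (1 / 2) * (y' ⬝ᵥ C.mulVec xhs) + η)
    (heq : xs = xhs)
    (R' : Matrix (Fin n) (Fin n) ℝ)
    (hAR' : A = - ((1 / 2 : ℝ) • (R' + R'ᵀ))) (hCR' : C = R'ᵀ - R') :
    ∀ xh' ∈ stdSimplex ℝ (Fin n),
      xh' ⬝ᵥ R'.mulVec xs ≤ xs ⬝ᵥ R'.mulVec xs + 2 * η := by
  intro xh' hxh'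
  subst heq
  have hCxx : xs ⬝ᵥ C *ᵥ xs = 0 := hCR' ▸ dotProduct_transpose_sub_self_mulVec_self R' xs
  have hη : 0 ≤ η := by linarith [hVI1 xs hxs]
  have hgap := hVI1 xh' hxh'
  rw [eq_neg_sub_half_smul_of_symm_skew_parts hAR' hCR']
  simp only [sub_mulVec, neg_mulVec, smul_mulVec, dotProduct_sub, dotProduct_neg,
    dotProduct_smul, smul_eq_mul]
  linarith

theorem stmt_19 {n : ℕ} (R : Matrix (Fin n) (Fin n) ℝ)
    (A C : Matrix (Fin n) (Fin n) ℝ)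
    (hA : A = (1 / 2 : ℝ) • (R + Rᵀ)) (hC : C = (1 / 2 : ℝ) • (R - Rᵀ))
    (η : ℝ) (xs xhs : Fin n → ℝ)
    (hxs : xs ∈ stdSimplex ℝ (Fin n)) (hxhs : xhs ∈ stdSimplex ℝ (Fin n))
    (hVI1 : ∀ y' ∈ stdSimplex ℝ (Fin n),
      xs ⬝ᵥ A.mulVec xs + (1 / 2) * (xs ⬝ᵥ C.mulVec xhs)
        ≤ y' ⬝ᵥ A.mulVec xs + (1 / 2) * (y' ⬝ᵥ C.mulVec xhs) + η)
    (hVI2 : ∀ xh' ∈ stdSimplex ℝ (Fin n),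
      - (xhs ⬝ᵥ A.mulVec xhs) + (1 / 2) * (xs ⬝ᵥ C.mulVec xhs)
        ≥ - (xh' ⬝ᵥ A.mulVec xhs) + (1 / 2) * (xs ⬝ᵥ C.mulVec xh') - η)
    (heq : xs = xhs)
    (R' : Matrix (Fin n) (Fin n) ℝ)
    (hAR' : A = - ((1 / 2 : ℝ) • (R' + R'ᵀ))) (hCR' : C = R'ᵀ - R') :
    ∀ xh' ∈ stdSimplex ℝ (Fin n),
      xh' ⬝ᵥ R'.mulVec xs ≤ xs ⬝ᵥ R'.mulVec xs + 2 * η :=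
  stmt_19_general A C η xs xhs hxs hVI1 heq R' hAR' hCR'
end
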